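/- arXiv:2408.10475 — 7 statements merged into one kernel-verified Lean document; each statement's English description precedes it below -/
import Mathlib

section
/- Let n ≥ 1, let 0 ≤ l ≤ n and 0 ≤ m ≤ n, and let z : Fin n → Bool have Hamming weight m. Then the sum over all l-element subsets S of Fin n of ∏_{i∈S} (-1)^{z i} equals c_l(m) = Σ_{s=0}^{l} (-1)^s C(m,s) C(n-m, l-s). (Equivalently, the operator C_l acts on the Hamming-weight-m sector as the scalar c_l(m).) -/
open Finset Matrix

noncomputable section

/-- Hamming weight of a basis label. -/
def hw {n : ℕ} (z : Fin n → Bool) : ℕ := (Finset.univ.filter fun i => z i = true).card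

lemma card_fiber {n : ℕ} (T : Finset (Fin n)) (l s : ℕ) (hs : s ≤ l) :
    ((Finset.powersetCard l (Finset.univ : Finset (Fin n))).filter
        fun S => (S ∩ T).card = s).card
      = T.card.choose s * Tᶜ.card.choose (l - s) := by
  rw [← Finset.card_powersetCard, ← Finset.card_powersetCard, ← Finset.card_product]
  apply Finset.card_bij' (fun S _ => (S ∩ T, S \ T)) (fun p _ => p.1 ∪ p.2)
  · rintro S hS
    simp only [Finset.mem_filter, Finset.mem_powersetCard] at hS
    obtain ⟨⟨-, hcard⟩, hint⟩ := hS
    simp only [Finset.mem_product, Finset.mem_powersetCard]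
    refine ⟨⟨Finset.inter_subset_right, hint⟩, fun x hx => ?_, ?_⟩
    · simp only [Finset.mem_sdiff] at hx
      simp [Finset.mem_compl, hx.2]
    · have := Finset.card_inter_add_card_sdiff S T
      omega
  · rintro ⟨A, B⟩ hp
    simp only [Finset.mem_product, Finset.mem_powersetCard] at hp
    obtain ⟨⟨hA, hAc⟩, hB, hBc⟩ := hp
    have hdisj : Disjoint A B :=
      (disjoint_compl_right.mono hA hB)
    simp only [Finset.mem_filter, Finset.mem_powersetCard]
    have hBT : Disjoint B T := disjoint_compl_left.mono_left hB
    constructor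
    · refine ⟨Finset.subset_univ _, ?_⟩
      rw [Finset.card_union_of_disjoint hdisj, hAc, hBc]
      omega
    · rw [Finset.union_inter_distrib_right, Finset.inter_eq_left.mpr hA,
        Finset.disjoint_iff_inter_eq_empty.mp hBT, Finset.union_empty, hAc]
  · intro S hS
    simp only [Finset.mem_filter, Finset.mem_powersetCard] at hS
    exact sup_inf_sdiff S T
  · rintro ⟨A, B⟩ hp
    simp only [Finset.mem_product, Finset.mem_powersetCard] at hp
    obtain ⟨⟨hA, hAc⟩, hB, hBc⟩ := hp
    have hBT : Disjoint B T := disjoint_compl_left.mono_left hB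
    have hAB : Disjoint A B := disjoint_compl_right.mono hA hB
    simp only [Prod.mk.injEq]
    constructor
    · rw [Finset.union_inter_distrib_right, Finset.inter_eq_left.mpr hA,
        Finset.disjoint_iff_inter_eq_empty.mp hBT, Finset.union_empty]
    · rw [Finset.union_sdiff_distrib, Finset.sdiff_eq_empty_iff_subset.mpr hA,
        Finset.empty_union, Finset.sdiff_eq_self_of_disjoint hBT]

/-- on the Hamming-weight-`m` sector, the operator `C_l` acts as the
scalar `c_l(m) = ∑_{s=0}^{l} (-1)^s C(m,s) C(n-m, l-s)`. -/
theorem stmt0 (n l m : ℕ) (hn : 1 ≤ n) (hl : l ≤ n) (hm : m ≤ n)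
    (z : Fin n → Bool) (hz : hw z = m) :
    ∑ S ∈ Finset.powersetCard l (Finset.univ : Finset (Fin n)),
        ∏ i ∈ S, (if z i = true then (-1 : ℤ) else 1)
      = ∑ s ∈ Finset.range (l+1),
          (-1 : ℤ)^s * (Nat.choose m s) * (Nat.choose (n-m) (l-s)) := by
  set T : Finset (Fin n) := Finset.univ.filter fun i => z i = true with hT
  have hTcard : T.card = m := hz
  have hTc : Tᶜ.card = n - m := by
    rw [Finset.card_compl, hTcard, Fintype.card_fin]
  -- rewrite each product as (-1)^(card (S ∩ T))
  have hprod : ∀ S ∈ Finset.powersetCard l (Finset.univ : Finset (Fin n)),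
      (∏ i ∈ S, (if z i = true then (-1 : ℤ) else 1)) = (-1 : ℤ) ^ (S ∩ T).card := by
    intro S _
    rw [Finset.prod_ite, Finset.prod_const, Finset.prod_const, one_pow, mul_one]
    congr 1
    congr 1
    ext i
    simp [hT, Finset.mem_inter, and_comm]
  rw [Finset.sum_congr rfl hprod]
  rw [← Finset.sum_fiberwise_of_maps_to (g := fun S => (S ∩ T).card)
      (t := Finset.range (l+1)) ?_]
  · refine Finset.sum_congr rfl fun s hs => ?_
    rw [Finset.mem_range] at hs
    have : ∀ S ∈ (Finset.powersetCard l (Finset.univ : Finset (Fin n))).filter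
        (fun S => (S ∩ T).card = s), (-1 : ℤ) ^ (S ∩ T).card = (-1 : ℤ) ^ s := by
      intro S hS
      rw [(Finset.mem_filter.mp hS).2]
    rw [Finset.sum_congr rfl this, Finset.sum_const,
      card_fiber T l s (by omega), hTcard, hTc]
    push_cast
    ring
  · intro S hS
    rw [Finset.mem_powersetCard] at hS
    simp only [Finset.mem_range]
    have := Finset.card_le_card (Finset.inter_subset_left : S ∩ T ⊆ S)
    omega
end
end

section
/- For all n ≥ 1 and 0 ≤ l, l' ≤ n, the trace of the matrix product C_l · C_{l'} equals 2^n · C(n,l) if l = l', and equals 0 if l ≠ l'. -/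
open Finset Matrix
open scoped symmDiff

noncomputable section

/-- The sign `(-1)^{z i}` of a bit. -/
def sgn (b : Bool) : ℂ := if b = true then -1 else 1

/-- The operator `C_l`: the diagonal matrix with entry
`∑_{S ⊆ Fin n, |S| = l} ∏_{i ∈ S} (-1)^{z i}`. -/
def Cmat (n l : ℕ) : Matrix (Fin n → Bool) (Fin n → Bool) ℂ :=
  Matrix.diagonal fun z => ∑ S ∈ Finset.powersetCard l (Finset.univ : Finset (Fin n)),
    ∏ i ∈ S, sgn (z i)

lemma sgn_sq (b : Bool) : sgn b * sgn b = 1 := by cases b <;> simp [sgn]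

lemma sum_prod_sgn (n : ℕ) (S : Finset (Fin n)) :
    ∑ z : Fin n → Bool, ∏ i ∈ S, sgn (z i)
      = if S = ∅ then (2 : ℂ) ^ n else 0 := by
  have h : ∀ z : Fin n → Bool, (∏ i ∈ S, sgn (z i))
      = ∏ i : Fin n, (if i ∈ S then sgn (z i) else 1) := by
    intro z
    rw [Finset.prod_ite_mem, Finset.univ_inter]
  simp_rw [h]
  rw [← Fintype.prod_sum (fun (i : Fin n) (b : Bool) => if i ∈ S then sgn b else 1)]
  have : ∀ i : Fin n, (∑ b : Bool, if i ∈ S then sgn b else 1)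
      = if i ∈ S then 0 else 2 := by
    intro i
    by_cases hi : i ∈ S <;> simp [hi, sgn]
  simp_rw [this]
  by_cases hS : S = ∅
  · simp [hS]
  · rw [if_neg hS]
    obtain ⟨i, hi⟩ := Finset.nonempty_iff_ne_empty.2 hS
    exact Finset.prod_eq_zero (Finset.mem_univ i) (by simp [hi])

lemma prod_sgn_mul (n : ℕ) (z : Fin n → Bool) (S T : Finset (Fin n)) :
    (∏ i ∈ S, sgn (z i)) * ∏ i ∈ T, sgn (z i)
      = ∏ i ∈ S ∆ T, sgn (z i) := by
  classical
  rw [← Finset.prod_union_inter]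
  have hu : S ∪ T = (S ∆ T) ∪ (S ∩ T) := (symmDiff_sup_inf S T).symm
  have hd : Disjoint (S ∆ T) (S ∩ T) := by
    simpa [Finset.inf_eq_inter] using (disjoint_symmDiff_inf S T)
  rw [hu, Finset.prod_union hd, mul_assoc, ← Finset.prod_mul_distrib]
  simp [sgn_sq]

/-- orthogonality `Tr(C_l C_{l'}) = δ_{l,l'} · 2^n · C(n,l)`. -/
theorem stmt2 (n l l' : ℕ) (hn : 1 ≤ n) (hl : l ≤ n) (hl' : l' ≤ n) :
    Matrix.trace (Cmat n l * Cmat n l')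
      = if l = l' then (2^n : ℂ) * (Nat.choose n l : ℂ) else 0 := by
  classical
  rw [Cmat, Cmat, Matrix.diagonal_mul_diagonal, Matrix.trace_diagonal]
  simp_rw [Finset.sum_mul_sum, prod_sgn_mul]
  rw [Finset.sum_comm]
  have hswap : ∀ S : Finset (Fin n),
      (∑ z : Fin n → Bool, ∑ T ∈ Finset.powersetCard l' Finset.univ,
          ∏ i ∈ S ∆ T, sgn (z i))
        = ∑ T ∈ Finset.powersetCard l' Finset.univ,
            ∑ z : Fin n → Bool, ∏ i ∈ S ∆ T, sgn (z i) := fun S => Finset.sum_comm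
  simp_rw [hswap]
  have key : ∀ S T : Finset (Fin n),
      ∑ z : Fin n → Bool, ∏ i ∈ S ∆ T, sgn (z i)
        = if S = T then (2:ℂ)^n else 0 := by
    intro S T
    rw [sum_prod_sgn]
    congr 1
    rw [← Finset.bot_eq_empty, symmDiff_eq_bot]
  simp_rw [key]
  have h2 : ∀ S : Finset (Fin n),
      (∑ T ∈ Finset.powersetCard l' Finset.univ, if S = T then (2:ℂ)^n else 0)
        = if S ∈ Finset.powersetCard l' (Finset.univ : Finset (Fin n)) then (2:ℂ)^n else 0 :=
    fun S => Finset.sum_ite_eq (Finset.powersetCard l' Finset.univ) S (fun _ => (2:ℂ)^n)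
  simp_rw [h2]
  by_cases hll : l = l'
  · subst hll
    rw [Finset.sum_congr rfl (fun S hS => if_pos hS), Finset.sum_const,
      Finset.card_powersetCard, Finset.card_univ, Fintype.card_fin, if_pos rfl,
      nsmul_eq_mul, mul_comm]
  · rw [if_neg hll, Finset.sum_congr rfl (fun S hS => if_neg ?_), Finset.sum_const_zero]
    intro hS'
    rw [Finset.mem_powersetCard] at hS hS'
    exact hll (hS.2 ▸ hS'.2 ▸ rfl)
end
end

section
/- Let n ≥ 2 and let V be a unitary U(1)-invariant matrix. Then for every natural number r, Δ3(V^r) ≡ r · Δ3(V) (mod 2π). -/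
open Finset Matrix

noncomputable section

/-- A matrix is U(1)-invariant if it vanishes off the Hamming-weight blocks. -/
def U1Invariant {n : ℕ} (M : Matrix (Fin n → Bool) (Fin n → Bool) ℂ) : Prop :=
  ∀ z z', hw z ≠ hw z' → M z z' = 0

/-- The weight-`m` block `M_m` of a matrix `M`. -/
def block {n : ℕ} (M : Matrix (Fin n → Bool) (Fin n → Bool) ℂ) (m : ℕ) :
    Matrix {z : Fin n → Bool // hw z = m} {z : Fin n → Bool // hw z = m} ℂ :=
  fun a b => M a.1 b.1

/-- The phase `θ_m(V) = arg det(V_m)`. -/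
def theta {n : ℕ} (V : Matrix (Fin n → Bool) (Fin n → Bool) ℂ) (m : ℕ) : ℝ :=
  Complex.arg (Matrix.det (block V m))

/-- The phase `Δ3(V) = θ_{n-1} - θ_1 - (n-2)(θ_n - θ_0)`. -/
def Delta3 {n : ℕ} (V : Matrix (Fin n → Bool) (Fin n → Bool) ℂ) : ℝ :=
  theta V (n-1) - theta V 1 - ((n : ℝ) - 2) * (theta V n - theta V 0)

/-- `x ≡ y (mod 2π)`. -/
def Mod2Pi (x y : ℝ) : Prop := ∃ j : ℤ, x - y = 2 * Real.pi * j

lemma U1_mul {n : ℕ} {V W : Matrix (Fin n → Bool) (Fin n → Bool) ℂ}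
    (hV : U1Invariant V) (hW : U1Invariant W) : U1Invariant (V * W) := by
  intro z z' h
  rw [Matrix.mul_apply]
  apply Finset.sum_eq_zero
  intro w _
  by_cases hzw : hw z = hw w
  · rw [hW w z' (hzw ▸ h), mul_zero]
  · rw [hV z w hzw, zero_mul]

lemma U1_pow {n : ℕ} {V : Matrix (Fin n → Bool) (Fin n → Bool) ℂ}
    (hV : U1Invariant V) (r : ℕ) : U1Invariant (V ^ r) := by
  induction r with
  | zero =>
    intro z z' h
    simp only [pow_zero]
    exact Matrix.one_apply_ne (fun hz => h (hz ▸ rfl))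
  | succ k ih =>
    rw [pow_succ]
    exact U1_mul ih hV

lemma block_mul {n : ℕ} {V : Matrix (Fin n → Bool) (Fin n → Bool) ℂ}
    (hV : U1Invariant V) (W : Matrix (Fin n → Bool) (Fin n → Bool) ℂ) (m : ℕ) :
    block (V * W) m = block V m * block W m := by
  ext a b
  simp only [block, Matrix.mul_apply]
  rw [← Finset.sum_filter_add_sum_filter_not Finset.univ (fun w => hw w = m)]
  have h2 : ∑ w ∈ Finset.univ.filter (fun w => ¬ hw w = m),
      V a.1 w * W w b.1 = 0 := by
    apply Finset.sum_eq_zero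
    intro w hw'
    simp only [Finset.mem_filter] at hw'
    rw [hV a.1 w (a.2.symm ▸ fun h => hw'.2 h.symm), zero_mul]
  rw [h2, add_zero]
  exact Finset.sum_subtype _ (fun x => by simp) _

lemma block_pow {n : ℕ} {V : Matrix (Fin n → Bool) (Fin n → Bool) ℂ}
    (hV : U1Invariant V) (r : ℕ) (m : ℕ) :
    block (V ^ r) m = (block V m) ^ r := by
  induction r with
  | zero =>
    ext a b
    simp only [pow_zero, block]
    rcases eq_or_ne a b with h | h
    · subst h; simp [Matrix.one_apply]
    · rw [Matrix.one_apply_ne h, Matrix.one_apply_ne (fun hz => h (Subtype.ext hz))]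
  | succ k ih =>
    rw [pow_succ, pow_succ, block_mul (U1_pow hV k), ih]

lemma arg_pow_mod (z : ℂ) (r : ℕ) :
    ∃ j : ℤ, Complex.arg (z ^ r) - r * Complex.arg z = 2 * Real.pi * j := by
  by_cases hz : z = 0
  · subst hz
    rcases Nat.eq_zero_or_pos r with h | h
    · subst h; exact ⟨0, by simp⟩
    · refine ⟨0, ?_⟩
      rw [zero_pow h.ne']
      simp
  · have key : ((Complex.arg (z ^ r) : ℝ) : Real.Angle) = ((r * Complex.arg z : ℝ) : Real.Angle) := by
      induction r with
      | zero => simp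
      | succ k ih =>
        rw [pow_succ, Complex.arg_mul_coe_angle (pow_ne_zero k hz) hz, ih]
        have h3 : ((k+1 : ℕ) : ℝ) * z.arg = k * z.arg + z.arg := by push_cast; ring
        rw [h3, Real.Angle.coe_add]
    rw [Real.Angle.angle_eq_iff_two_pi_dvd_sub] at key
    obtain ⟨k, hk⟩ := key
    exact ⟨k, by linarith [hk]⟩

/-- additivity of `Δ3`: for a unitary U(1)-invariant `V`,
`Δ3(V^r) ≡ r · Δ3(V) (mod 2π)` for every natural number `r`. -/
theorem stmt4 (n : ℕ) (hn : 2 ≤ n) (V : Matrix (Fin n → Bool) (Fin n → Bool) ℂ)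
    (hV : V ∈ Matrix.unitaryGroup (Fin n → Bool) ℂ) (hU1 : U1Invariant V) (r : ℕ) :
    Mod2Pi (Delta3 (V^r)) (r * Delta3 V) := by
  have key : ∀ m, ∃ j : ℤ, theta (V^r) m - r * theta V m = 2 * Real.pi * j := by
    intro m
    have h : theta (V^r) m = Complex.arg ((Matrix.det (block V m))^r) := by
      rw [theta, block_pow hU1, Matrix.det_pow]
    rw [h]
    exact arg_pow_mod _ r
  obtain ⟨j1, h1⟩ := key (n-1)
  obtain ⟨j2, h2⟩ := key 1
  obtain ⟨j3, h3⟩ := key n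
  obtain ⟨j4, h4⟩ := key 0
  refine ⟨j1 - j2 - ((n:ℤ)-2)*(j3-j4), ?_⟩
  simp only [Delta3]
  push_cast
  linear_combination h1 - h2 - ((n:ℝ)-2)*(h3 - h4)
end
end

section
/- Let n ≥ 1 and let 0 ≤ l < k ≤ n. Then Tr(B_k · C_l) = 0. -/
open Finset Matrix

noncomputable section

/-- The projector `Π_m` onto the Hamming-weight-`m` sector. -/
def Pimat (n m : ℕ) : Matrix (Fin n → Bool) (Fin n → Bool) ℂ :=
  Matrix.diagonal fun z => if hw z = m then 1 else 0

/-- The operator `B_k = ∑_{m=0}^{k} (-1)^m C(n-m, k-m) Π_m`. -/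
def Bmat (n k : ℕ) : Matrix (Fin n → Bool) (Fin n → Bool) ℂ :=
  ∑ m ∈ Finset.range (k+1), ((-1 : ℂ)^m * (Nat.choose (n-m) (k-m) : ℂ)) • Pimat n m

/-!
Since `C(n-m, k-m)` counts the `k`-sets `T ⊇ supp z` of a label `z` of weight `m`, the diagonal
operator `B_k` is `∑_{|T| = k} D_T` with `(D_T) z z = (-1)^{|z|}` if `z` vanishes off `T` and `0`
otherwise. Both `D_T` (with site factors `restrictedSgn T i`) and each summand
`∏_{i ∈ S} (-1)^{z i}` of `C_l` factor over the sites, so `Tr(D_T C_l)` is a sum over `S` of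
products of one-bit sums. Since `|T| = k > l = |S|`, some site lies in `T \ S`, and there the
one-bit sum is `sgn false + sgn true = 0`.
-/

section
variable {ι : Type*} [Fintype ι] [DecidableEq ι]

def restrictedSgn (T : Finset ι) (i : ι) (b : Bool) : ℂ :=
  if i ∈ T then sgn b else if b then 0 else 1

lemma prod_restrictedSgn (T : Finset ι) (z : ι → Bool) :
    ∏ i, restrictedSgn T i (z i)
      = if ({i | z i = true} : Finset ι) ⊆ T then (-1) ^ #{i | z i = true} else 0 := by
  have hsite : ∀ i, restrictedSgn T i (z i)
      = if z i = true then (if i ∈ T then -1 else 0) else 1 := by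
    intro i
    cases z i <;> simp [restrictedSgn, sgn]
  rw [Fintype.prod_congr _ _ hsite, prod_ite, prod_const_one, mul_one, prod_ite_zero, prod_const]
  rfl

lemma sum_powersetCard_prod_restrictedSgn (k : ℕ) (z : ι → Bool) :
    ∑ T ∈ powersetCard k univ, ∏ i, restrictedSgn T i (z i)
      = if #{i | z i = true} ≤ k then
          (-1) ^ #{i | z i = true} *
            ((Fintype.card ι - #{i | z i = true}).choose (k - #{i | z i = true}) : ℂ)
        else 0 := by
  simp only [prod_restrictedSgn]
  rw [← sum_filter, sum_const, nsmul_eq_mul]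
  split_ifs with hk
  · rw [card_filter_powersetCard_subset _ _ _ (subset_univ _) hk, card_univ, mul_comm]
  · rw [filter_eq_empty_iff.mpr, card_empty, Nat.cast_zero, zero_mul]
    intro T hT hsub
    exact hk ((card_le_card hsub).trans (mem_powersetCard.mp hT).2.le)

lemma sum_prod_restrictedSgn_mul_prod_sgn {T S : Finset ι} (hTS : ¬ T ⊆ S) :
    ∑ z : ι → Bool, (∏ i, restrictedSgn T i (z i)) * ∏ i ∈ S, sgn (z i) = 0 := by
  obtain ⟨j, hjT, hjS⟩ := not_subset.mp hTS
  have hsite : ∀ z : ι → Bool, (∏ i, restrictedSgn T i (z i)) * ∏ i ∈ S, sgn (z i)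
      = ∏ i, restrictedSgn T i (z i) * (if i ∈ S then sgn (z i) else 1) := by
    intro z
    rw [prod_mul_distrib, prod_ite_mem, univ_inter]
  rw [Fintype.sum_congr _ _ hsite,
    ← Fintype.prod_sum fun i b => restrictedSgn T i b * if i ∈ S then sgn b else 1]
  refine prod_eq_zero (mem_univ j) ?_
  simp [restrictedSgn, hjT, hjS, sgn]

end

lemma Bmat_eq_diagonal (n k : ℕ) :
    Bmat n k = diagonal fun z => ∑ T ∈ powersetCard k univ, ∏ i, restrictedSgn T i (z i) := by
  ext z w
  obtain rfl | hzw := eq_or_ne z w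
  · simp only [Bmat, Pimat, Matrix.sum_apply, Matrix.smul_apply, diagonal_apply_eq, smul_eq_mul,
      mul_boole]
    rw [sum_ite_eq, sum_powersetCard_prod_restrictedSgn, Fintype.card_fin]
    simp only [mem_range, Nat.lt_succ_iff, hw]
  · simp [Bmat, Pimat, Matrix.sum_apply, hzw]

theorem stmt8_general (n k l : ℕ) (hlk : l < k) :
    Matrix.trace (Bmat n k * Cmat n l) = 0 := by
  have hTS : ∀ T ∈ powersetCard k univ, ∀ S ∈ powersetCard l (univ : Finset (Fin n)),
      ¬ T ⊆ S := by
    intro T hT S hS hsub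
    rw [mem_powersetCard_univ] at hT hS
    exact hlk.not_ge (hT ▸ hS ▸ card_le_card hsub)
  rw [Bmat_eq_diagonal, Cmat, diagonal_mul_diagonal, trace_diagonal]
  simp only [sum_mul_sum]
  rw [sum_comm]
  refine sum_eq_zero fun T hT => ?_
  rw [sum_comm]
  exact sum_eq_zero fun S hS => sum_prod_restrictedSgn_mul_prod_sgn (hTS T hT S hS)

/-- `Tr(B_k C_l) = 0` for `l < k`. -/
theorem stmt8 (n k l : ℕ) (hn : 1 ≤ n) (hlk : l < k) (hk : k ≤ n) :
    Matrix.trace (Bmat n k * Cmat n l) = 0 :=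
  stmt8_general n k l hlk
end
end

section
/- Let n ≥ 1 and 0 ≤ k ≤ n. Then Tr(B_k · C_k) = 2^k · C(n,k). -/
open Finset Matrix

noncomputable section

lemma bdiag (n k : ℕ) : Bmat n k = Matrix.diagonal (fun z =>
    if hw z ≤ k then (-1:ℂ)^(hw z) * ((n - hw z).choose (k - hw z) : ℂ) else 0) := by
  unfold Bmat Pimat
  ext z w
  by_cases h : z = w
  · subst h
    simp [Matrix.sum_apply, Matrix.diagonal_apply_eq, Finset.sum_ite_eq',
      Nat.lt_succ_iff]
  · simp [Matrix.sum_apply, Matrix.diagonal_apply_ne _ h, h]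

lemma count_supersets {n k : ℕ} (Z : Finset (Fin n)) (hZ : Z.card ≤ k) :
    (((Finset.powersetCard k (Finset.univ : Finset (Fin n)))).filter (fun W => Z ⊆ W)).card
      = (n - Z.card).choose (k - Z.card) := by
  have := Finset.card_bij' (fun (W : Finset (Fin n)) _ => W \ Z)
    (fun (T : Finset (Fin n)) _ => T ∪ Z)
    (s := ((Finset.powersetCard k (Finset.univ : Finset (Fin n)))).filter (fun W => Z ⊆ W))
    (t := Finset.powersetCard (k - Z.card) Zᶜ)
    (by
      intro W hW
      simp only [Finset.mem_filter, Finset.mem_powersetCard] at hW ⊢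
      obtain ⟨⟨-, hcard⟩, hsub⟩ := hW
      constructor
      · intro i hi
        simp only [Finset.mem_sdiff] at hi
        simp [Finset.mem_compl, hi.2]
      · rw [Finset.card_sdiff_of_subset hsub, hcard])
    (by
      intro T hT
      simp only [Finset.mem_filter, Finset.mem_powersetCard] at hT ⊢
      obtain ⟨hsub, hcard⟩ := hT
      have hd : Disjoint T Z := by
        rw [Finset.disjoint_right]
        intro i hiZ hiT
        exact (Finset.mem_compl.mp (hsub hiT)) hiZ
      refine ⟨⟨Finset.subset_univ _, ?_⟩, Finset.subset_union_right⟩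
      rw [Finset.card_union_of_disjoint hd, hcard]
      omega)
    (by
      intro W hW
      simp only [Finset.mem_filter] at hW
      exact Finset.sdiff_union_of_subset hW.2)
    (by
      intro T hT
      simp only [Finset.mem_powersetCard] at hT
      have hd : Disjoint T Z := by
        rw [Finset.disjoint_right]
        intro i hiZ hiT
        exact (Finset.mem_compl.mp (hT.1 hiT)) hiZ
      exact Finset.union_sdiff_cancel_right hd)
  rw [this, Finset.card_powersetCard, Finset.card_compl, Fintype.card_fin]

/-- `Tr(B_k C_k) = 2^k C(n,k)`. -/
theorem stmt9 (n k : ℕ) (hn : 1 ≤ n) (hk : k ≤ n) :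
    Matrix.trace (Bmat n k * Cmat n k) = (2^k : ℂ) * (Nat.choose n k : ℂ) := by
  classical
  have htr : Matrix.trace (Bmat n k * Cmat n k) =
      ∑ z : Fin n → Bool,
        (if hw z ≤ k then (-1:ℂ)^(hw z) * ((n - hw z).choose (k - hw z) : ℂ) else 0)
        * ∑ S ∈ Finset.powersetCard k (Finset.univ : Finset (Fin n)), ∏ i ∈ S, sgn (z i) := by
    rw [bdiag, Cmat, Matrix.diagonal_mul_diagonal, Matrix.trace_diagonal]
  -- reindex by subsets
  set cZ : Finset (Fin n) → ℂ := fun Z =>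
    ∑ S ∈ Finset.powersetCard k (Finset.univ : Finset (Fin n)),
      ∏ i ∈ S, (if i ∈ Z then (-1:ℂ) else 1) with hcZ
  have hre : Matrix.trace (Bmat n k * Cmat n k) =
      ∑ Z ∈ (Finset.univ : Finset (Fin n)).powerset,
        (if Z.card ≤ k then (-1:ℂ)^(Z.card) * ((n - Z.card).choose (k - Z.card) : ℂ) else 0)
          * cZ Z := by
    rw [htr]
    refine Finset.sum_nbij' (fun z => Finset.univ.filter (fun i => z i = true))
      (fun Z => fun i => decide (i ∈ Z)) (by simp) (by simp) ?_ ?_ ?_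
    · intro z _
      funext i
      simp
    · intro Z _
      ext i
      simp
    · intro z _
      have hwz : hw z = (Finset.univ.filter (fun i => z i = true)).card := rfl
      rw [hwz, hcZ]
      congr 1
      refine Finset.sum_congr rfl fun S _ => ?_
      refine Finset.prod_congr rfl fun i _ => ?_
      by_cases h : z i = true <;> simp [h, sgn]
  rw [hre]
  -- replace the coefficient by a superset count
  have hstep : ∀ Z ∈ (Finset.univ : Finset (Fin n)).powerset,
      (if Z.card ≤ k then (-1:ℂ)^(Z.card) * ((n - Z.card).choose (k - Z.card) : ℂ) else 0) * cZ Z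
      = ∑ W ∈ Finset.powersetCard k (Finset.univ : Finset (Fin n)),
          (if Z ⊆ W then (-1:ℂ)^(Z.card) * cZ Z else 0) := by
    intro Z _
    rw [← Finset.sum_filter]
    rw [Finset.sum_const, nsmul_eq_mul]
    by_cases hZ : Z.card ≤ k
    · rw [if_pos hZ, count_supersets Z hZ]
      ring
    · rw [if_neg hZ]
      have : ((Finset.powersetCard k (Finset.univ : Finset (Fin n))).filter
          (fun W => Z ⊆ W)) = ∅ := by
        refine Finset.filter_eq_empty_iff.mpr ?_
        intro W hW hsub
        exact hZ ((Finset.card_le_card hsub).trans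
          (le_of_eq (Finset.mem_powersetCard.mp hW).2))
      rw [this]
      simp
  rw [Finset.sum_congr rfl hstep, Finset.sum_comm]
  -- inner sum over Z for fixed W
  have hinner : ∀ W ∈ Finset.powersetCard k (Finset.univ : Finset (Fin n)),
      (∑ Z ∈ (Finset.univ : Finset (Fin n)).powerset,
        if Z ⊆ W then (-1:ℂ)^(Z.card) * cZ Z else 0) = 2^k := by
    intro W hW
    obtain ⟨-, hWcard⟩ := Finset.mem_powersetCard.mp hW
    rw [← Finset.sum_filter]
    have hfil : ((Finset.univ : Finset (Fin n)).powerset.filter (fun Z => Z ⊆ W))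
        = W.powerset := by
      ext Z
      simp [Finset.mem_powerset]
    rw [hfil, hcZ]
    simp only [Finset.mul_sum]
    rw [Finset.sum_comm]
    have hterm : ∀ S ∈ Finset.powersetCard k (Finset.univ : Finset (Fin n)),
        (∑ Z ∈ W.powerset, (-1:ℂ)^(Z.card) * ∏ i ∈ S, (if i ∈ Z then (-1:ℂ) else 1))
        = if W = S then (2:ℂ)^k else 0 := by
      intro S hS
      obtain ⟨-, hScard⟩ := Finset.mem_powersetCard.mp hS
      have h1 : ∀ Z ∈ W.powerset,
          (-1:ℂ)^(Z.card) * ∏ i ∈ S, (if i ∈ Z then (-1:ℂ) else 1)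
          = ∏ i ∈ Z, (if i ∈ S then (1:ℂ) else -1) := by
        intro Z _
        have e1 : ∏ i ∈ S, (if i ∈ Z then (-1:ℂ) else 1) = (-1:ℂ)^((S ∩ Z).card) := by
          rw [Finset.prod_ite_mem, Finset.prod_const]
        have e2 : ∏ i ∈ Z, (if i ∈ S then (1:ℂ) else -1)
            = ∏ i ∈ Z, ((-1:ℂ) * (if i ∈ S then (-1:ℂ) else 1)) := by
          refine Finset.prod_congr rfl fun i _ => ?_
          by_cases h : i ∈ S <;> simp [h]
        rw [e1, e2, Finset.prod_mul_distrib, Finset.prod_const, Finset.prod_ite_mem,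
          Finset.prod_const, Finset.inter_comm]
      rw [Finset.sum_congr rfl h1]
      have e3 : (∑ Z ∈ W.powerset, ∏ i ∈ Z, (if i ∈ S then (1:ℂ) else -1))
          = ∏ i ∈ W, ((if i ∈ S then (1:ℂ) else -1) + 1) := by
        rw [Finset.prod_add]
        simp
      rw [e3]
      by_cases hWS : W ⊆ S
      · have hWeq : W = S := Finset.eq_of_subset_of_card_le hWS (by rw [hWcard, hScard])
        rw [if_pos hWeq]
        have : ∀ i ∈ W, ((if i ∈ S then (1:ℂ) else -1) + 1) = 2 := by
          intro i hi
          rw [if_pos (hWeq ▸ hi)]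
          norm_num
        rw [Finset.prod_congr rfl this, Finset.prod_const, hWcard]
      · have hWeq : W ≠ S := fun h => hWS (h ▸ le_refl _)
        rw [if_neg hWeq]
        obtain ⟨i, hiW, hiS⟩ := Finset.not_subset.mp hWS
        refine Finset.prod_eq_zero hiW ?_
        rw [if_neg hiS]
        norm_num
    rw [Finset.sum_congr rfl hterm, Finset.sum_ite_eq, if_pos hW]
  rw [Finset.sum_congr rfl hinner, Finset.sum_const, nsmul_eq_mul,
    Finset.card_powersetCard, Finset.card_univ, Fintype.card_fin]
  ring
end
end

section
/- For all n ≥ 1, all 0 ≤ k ≤ n, and every real θ: Σ_{m=0}^{k} (-1)^m C(n-m, k-m) C(n,m) · Complex.exp(i·θ·(n-2m)) = C(n,k) · (2i)^k · Complex.exp(i·θ·(n-k)) · (sin θ)^k. (Equivalently, Tr(B_k · (e^{iθZ})^{⊗n}) = C(n,k)(2i)^k e^{iθ(n-k)} sin^k θ, where (e^{iθZ})^{⊗n} is the diagonal matrix with diagonal entry e^{iθ(n-2|z|)}.) -/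
open Finset

/-! Since `C(n-m, k-m) C(n, m) = C(n, k) C(k, m)`, the sum is `C(n, k) e^{iθn}` times the binomial
expansion of `(1 - e^{-2iθ})^k`, and `e^{iθ} (1 - e^{-2iθ}) = e^{iθ} - e^{-iθ} = 2i sin θ`. -/

theorem Nat.choose_sub_mul_choose {n k m : ℕ} (hmk : m ≤ k) :
    (n - m).choose (k - m) * n.choose m = n.choose k * k.choose m := by
  rw [Nat.choose_mul hmk, Nat.mul_comm]

theorem one_sub_pow_eq_sum_range {R : Type*} [CommRing R] (x : R) (k : ℕ) :
    (1 - x) ^ k = ∑ m ∈ range (k + 1), (-1) ^ m * (k.choose m : R) * x ^ m := by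
  rw [sub_eq_neg_add, add_pow]
  refine sum_congr rfl fun m _ => ?_
  rw [neg_pow, one_pow]
  ring

theorem Complex.two_I_mul_sin (z : ℂ) :
    2 * I * sin z = exp (I * z) * (1 - exp (-2 * I * z)) := by
  have h : exp (I * z) * exp (-2 * I * z) = exp (-z * I) := by
    rw [← exp_add]; ring_nf
  rw [mul_one_sub, h, mul_comm I z]
  linear_combination I * two_sin z + (exp (-z * I) - exp (z * I)) * I_mul_I

theorem Complex.sum_choose_mul_exp (n k : ℕ) (z : ℂ) :
    ∑ m ∈ range (k + 1),
        (-1 : ℂ) ^ m * ((n - m).choose (k - m) : ℂ) * (n.choose m : ℂ) *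
          exp (I * z * ((n : ℂ) - 2 * (m : ℂ)))
      = (n.choose k : ℂ) * (2 * I) ^ k * exp (I * z * ((n : ℂ) - (k : ℂ))) * sin z ^ k := by
  have hexp_sub (a : ℂ) (j : ℕ) :
      exp (I * z * (a - j)) * exp (I * z) ^ j = exp (I * z * a) := by
    rw [← exp_nat_mul, ← exp_add]; ring_nf
  have hexp_two_mul (m : ℕ) :
      exp (I * z * ((n : ℂ) - 2 * (m : ℂ))) = exp (I * z * n) * exp (-2 * I * z) ^ m := by
    rw [← exp_nat_mul, ← exp_add]; ring_nf
  calc _ = ∑ m ∈ range (k + 1), (n.choose k : ℂ) * exp (I * z * n) *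
          ((-1) ^ m * (k.choose m : ℂ) * exp (-2 * I * z) ^ m) := by
        refine sum_congr rfl fun m hm => ?_
        have hcoeff := congrArg (Nat.cast (R := ℂ))
          (Nat.choose_sub_mul_choose (n := n) (Nat.lt_succ_iff.mp (mem_range.mp hm)))
        push_cast at hcoeff
        rw [hexp_two_mul]
        linear_combination (-1) ^ m * exp (I * z * n) * exp (-2 * I * z) ^ m * hcoeff
    _ = (n.choose k : ℂ) * exp (I * z * n) * (1 - exp (-2 * I * z)) ^ k := by
        rw [← mul_sum, one_sub_pow_eq_sum_range]
    _ = (n.choose k : ℂ) *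
          (exp (I * z * (n - k)) * (exp (I * z) * (1 - exp (-2 * I * z))) ^ k) := by
        rw [mul_pow, ← hexp_sub n k]; ring
    _ = _ := by
        rw [← two_I_mul_sin]; ring

theorem stmt11_general (n k : ℕ) (θ : ℝ) :
    ∑ m ∈ Finset.range (k+1),
        (-1 : ℂ)^m * (Nat.choose (n-m) (k-m) : ℂ) * (Nat.choose n m : ℂ) *
          Complex.exp (Complex.I * (θ : ℂ) * ((n : ℂ) - 2 * (m : ℂ)))
      = (Nat.choose n k : ℂ) * (2 * Complex.I)^k *
          Complex.exp (Complex.I * (θ : ℂ) * ((n : ℂ) - (k : ℂ))) *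
          ((Real.sin θ : ℂ))^k := by
  rw [Complex.ofReal_sin]
  exact Complex.sum_choose_mul_exp n k θ

/-- `Tr(B_k (e^{iθZ})^{⊗n}) = C(n,k) (2i)^k e^{iθ(n-k)} sin^k θ`. -/
theorem stmt11 (n k : ℕ) (hn : 1 ≤ n) (hk : k ≤ n) (θ : ℝ) :
    ∑ m ∈ Finset.range (k+1),
        (-1 : ℂ)^m * (Nat.choose (n-m) (k-m) : ℂ) * (Nat.choose n m : ℂ) *
          Complex.exp (Complex.I * (θ : ℂ) * ((n : ℂ) - 2 * (m : ℂ)))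
      = (Nat.choose n k : ℂ) * (2 * Complex.I)^k *
          Complex.exp (Complex.I * (θ : ℂ) * ((n : ℂ) - (k : ℂ))) *
          ((Real.sin θ : ℂ))^k :=
  stmt11_general n k θ
end

section
/- (Lemma 1 of the paper.) Let n ≥ 1, let 0 ≤ k ≤ n, and let H be a complex matrix that is k-local, i.e., a finite sum of matrices each supported on some subset of Fin n of size at most k. Then 2^n · Tr(H · B_k) = 2^k · Tr(H · C_k), and Tr(H · B_r) = 0 for every r with k < r ≤ n. -/
open Finset Matrix

noncomputable section

/-- A matrix `M` is supported on `S ⊆ Fin n` if it acts only on the qubits in `S`. -/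
def SupportedOn {n : ℕ} (S : Finset (Fin n)) (M : Matrix (Fin n → Bool) (Fin n → Bool) ℂ) : Prop :=
  ∃ f : ({ i // i ∈ S } → Bool) → ({ i // i ∈ S } → Bool) → ℂ,
    ∀ z z' : Fin n → Bool,
      M z z' = if ∀ i ∉ S, z i = z' i then f (fun i => z i.1) (fun i => z' i.1) else 0

/-- A matrix is `k`-local if it is a finite sum of matrices each supported on a
subset of size at most `k`. -/
def KLocal {n : ℕ} (k : ℕ) (M : Matrix (Fin n → Bool) (Fin n → Bool) ℂ) : Prop :=
  ∃ (p : ℕ) (g : Fin p → Matrix (Fin n → Bool) (Fin n → Bool) ℂ) (S : Fin p → Finset (Fin n)),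
    (∀ i, (S i).card ≤ k ∧ SupportedOn (S i) (g i)) ∧ M = ∑ i, g i


lemma key1 (N : ℕ) : ∀ M a : ℕ, N ≤ M → a ≤ M →
    ∑ j ∈ range (a+1), (-1:ℂ)^j * (N.choose j) * ((M-j).choose (a-j)) = ((M-N).choose a : ℂ) := by
  induction N with
  | zero =>
    intro M a h1 h2
    rw [Finset.sum_eq_single 0]
    · simp
    · intro j hj hj0
      simp [Nat.choose_eq_zero_of_lt (Nat.pos_of_ne_zero hj0)]
    · simp
  | succ N ih =>
    intro M a h1 h2
    rcases Nat.eq_zero_or_pos a with rfl | ha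
    · simp
    rw [Finset.sum_range_succ' _ a]
    have hstep : ∀ i ∈ range a, (-1:ℂ)^(i+1) * ((N+1).choose (i+1)) * ((M-(i+1)).choose (a-(i+1)))
        = -((-1:ℂ)^i * (N.choose i) * (((M-1)-i).choose ((a-1)-i)))
          + (-1:ℂ)^(i+1) * (N.choose (i+1)) * ((M-(i+1)).choose (a-(i+1))) := by
      intro i hi
      have h3 : M - (i+1) = (M-1) - i := by omega
      have h4 : a - (i+1) = (a-1) - i := by omega
      rw [Nat.choose_succ_succ, h3, h4]
      push_cast
      ring
    rw [Finset.sum_congr rfl hstep, Finset.sum_add_distrib]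
    have e1 : ∑ i ∈ range a, -((-1:ℂ)^i * (N.choose i) * (((M-1)-i).choose ((a-1)-i)))
        = -(((M-1)-N).choose (a-1) : ℂ) := by
      have h := ih (M-1) (a-1) (by omega) (by omega)
      rw [show (a-1)+1 = a by omega] at h
      rw [Finset.sum_neg_distrib, h]
    have e2 : ∑ i ∈ range a, (-1:ℂ)^(i+1) * (N.choose (i+1)) * ((M-(i+1)).choose (a-(i+1)))
        = ((M-N).choose a : ℂ) - (M.choose a : ℂ) := by
      have := ih M a (by omega) h2
      rw [Finset.sum_range_succ' _ a] at this
      simp only [pow_zero, Nat.choose_zero_right, Nat.cast_one, one_mul, Nat.sub_zero,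
        mul_one] at this
      linear_combination this
    rw [e1, e2]
    simp only [pow_zero, Nat.choose_zero_right, Nat.cast_one, one_mul, Nat.sub_zero, mul_one]
    have pascal : (M-N).choose a = ((M-(N+1)).choose (a-1)) + ((M-(N+1)).choose a) := by
      have h5 : M - N = (M-(N+1)) + 1 := by omega
      have h6 : a = (a-1) + 1 := by omega
      rw [h5]
      conv_lhs => rw [h6]
      rw [Nat.choose_succ_succ]
      have hsucc : (a-1).succ = a := by omega
      rw [hsucc]
    have h7 : M - 1 - N = M - (N+1) := by omega
    rw [h7, pascal]
    push_cast
    ring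

/-- General Hamming weight. -/
def wt {α : Type} [Fintype α] (y : α → Bool) : ℕ :=
  (Finset.univ.filter fun i => y i = true).card

lemma sum_fun_bool_weight (α : Type) [Fintype α] [DecidableEq α] (G : ℕ → ℂ) :
    ∑ y : α → Bool, G (wt y)
      = ∑ j ∈ range (Fintype.card α + 1), (Nat.choose (Fintype.card α) j : ℂ) * G j := by
  unfold wt
  rw [show (∑ y : α → Bool, G ((univ.filter fun i => y i = true).card))
      = ∑ A ∈ (univ : Finset α).powerset, G A.card from ?_]
  · rw [Finset.sum_powerset]
    simp [Finset.sum_powersetCard, Finset.card_univ, nsmul_eq_mul]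
  · apply Finset.sum_nbij' (i := fun y => univ.filter fun i => y i = true)
      (j := fun A => fun i => decide (i ∈ A)) <;> intros <;> simp

lemma sum_fun_bool_prod (α : Type) [Fintype α] [DecidableEq α] (g : α → Bool → ℂ) :
    ∑ y : α → Bool, ∏ i, g i (y i) = ∏ i, (g i false + g i true) := by
  have h : ∀ i : α, g i false + g i true = ∑ b ∈ (univ : Finset Bool), g i b := by
    intro i; rw [Fintype.sum_bool]; ring
  simp_rw [h]
  rw [Finset.prod_univ_sum, Fintype.piFinset_univ]

/-- the splitting equivalence -/
def eS {n : ℕ} (S : Finset (Fin n)) :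
    (Fin n → Bool) ≃ ({i // i ∈ S} → Bool) × ({i // ¬ i ∈ S} → Bool) :=
  Equiv.piEquivPiSubtypeProd (fun i => i ∈ S) (fun _ => Bool)

lemma eS_symm_in {n : ℕ} (S : Finset (Fin n)) (x : {i // i ∈ S} → Bool)
    (y : {i // ¬ i ∈ S} → Bool) (i : {i // i ∈ S}) : (eS S).symm (x, y) i.1 = x i := by
  rw [eS, Equiv.piEquivPiSubtypeProd_symm_apply, dif_pos i.2]

lemma eS_symm_out {n : ℕ} (S : Finset (Fin n)) (x : {i // i ∈ S} → Bool)
    (y : {i // ¬ i ∈ S} → Bool) (i : {i // ¬ i ∈ S}) : (eS S).symm (x, y) i.1 = y i := by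
  rw [eS, Equiv.piEquivPiSubtypeProd_symm_apply, dif_neg i.2]

lemma hw_split {n : ℕ} (S : Finset (Fin n)) (x : {i // i ∈ S} → Bool)
    (y : {i // ¬ i ∈ S} → Bool) : hw ((eS S).symm (x, y)) = wt x + wt y := by
  unfold hw wt
  rw [Finset.card_filter, Finset.card_filter, Finset.card_filter,
    ← Fintype.sum_subtype_add_sum_subtype (fun i => i ∈ S)
      (fun i => if (eS S).symm (x, y) i = true then 1 else 0)]
  congr 1
  · exact Finset.sum_congr (by congr!) fun i _ => by rw [eS_symm_in]
  · exact Finset.sum_congr (by congr!) fun i _ => by rw [eS_symm_out]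

lemma sum_split {n : ℕ} (S : Finset (Fin n)) (F : (Fin n → Bool) → ℂ) :
    ∑ z, F z = ∑ x : {i // i ∈ S} → Bool, ∑ y : {i // ¬ i ∈ S} → Bool,
      F ((eS S).symm (x, y)) := by
  rw [← Equiv.sum_comp (eS S).symm F, Fintype.sum_prod_type]

lemma card_subOut {n : ℕ} (S : Finset (Fin n)) :
    Fintype.card {i // ¬ i ∈ S} = n - S.card := by
  simp [Fintype.card_subtype_compl, Fintype.card_coe]

def bcoef (n r m : ℕ) : ℂ := if m ≤ r then (-1 : ℂ)^m * ((n-m).choose (r-m) : ℂ) else 0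

lemma Bmat_diag (n r : ℕ) : Bmat n r = Matrix.diagonal (fun z => bcoef n r (hw z)) := by
  unfold Bmat Pimat
  ext z z'
  by_cases h : z = z'
  · subst h
    simp only [Matrix.sum_apply, Matrix.smul_apply, Matrix.diagonal_apply_eq, smul_eq_mul,
      mul_ite, mul_one, mul_zero]
    rw [Finset.sum_ite_eq (range (r+1)) (hw z)
      (fun m => (-1:ℂ)^m * ((n-m).choose (r-m) : ℂ))]
    simp [Nat.lt_add_one_iff, bcoef]
  · simp [Matrix.sum_apply, Matrix.diagonal_apply_ne _ h, h]

lemma trace_mul_diag {α : Type} [Fintype α] [DecidableEq α]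
    (M : Matrix α α ℂ) (d : α → ℂ) :
    Matrix.trace (M * Matrix.diagonal d) = ∑ z, M z z * d z := by
  simp [Matrix.trace, Matrix.diag, Matrix.mul_diagonal]

lemma key2 (n r s w : ℕ) (hws : w ≤ s) (hsr : s ≤ r) (hrn : r ≤ n) :
    ∑ j ∈ range ((n-s)+1), (((n-s).choose j : ℕ) : ℂ) * bcoef n r (w+j)
      = (-1:ℂ)^w * (((s-w).choose (r-w) : ℕ) : ℂ) := by
  set N := n - s with hN
  set M := n - w with hM
  set a := r - w with ha
  have hNM : N ≤ M := by omega
  have haM : a ≤ M := by omega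
  have hMN : M - N = s - w := by omega
  have step1 : ∑ j ∈ range (N+1), ((N.choose j : ℕ) : ℂ) * bcoef n r (w+j)
      = (-1:ℂ)^w * ∑ j ∈ range (N+1),
          (if j ≤ a then (-1:ℂ)^j * (N.choose j) * ((M-j).choose (a-j)) else 0) := by
    rw [Finset.mul_sum]
    apply Finset.sum_congr rfl
    intro j _
    unfold bcoef
    have h1 : w + j ≤ r ↔ j ≤ a := by omega
    by_cases hj : j ≤ a
    · rw [if_pos (h1.mpr hj), if_pos hj]
      have h2 : n - (w+j) = M - j := by omega
      have h3 : r - (w+j) = a - j := by omega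
      rw [h2, h3, pow_add]
      ring
    · rw [if_neg (fun hc => hj (h1.mp hc)), if_neg hj]
      ring
  have step2 : ∑ j ∈ range (N+1),
        (if j ≤ a then (-1:ℂ)^j * (N.choose j) * ((M-j).choose (a-j)) else 0)
      = ∑ j ∈ range (a+1), (-1:ℂ)^j * (N.choose j) * ((M-j).choose (a-j)) := by
    have e1 : ∑ j ∈ range (N+1),
          (if j ≤ a then (-1:ℂ)^j * (N.choose j) * ((M-j).choose (a-j)) else 0)
        = ∑ j ∈ range (N+a+1),
          (if j ≤ a then (-1:ℂ)^j * (N.choose j) * ((M-j).choose (a-j)) else 0) := by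
      apply Finset.sum_subset
      · intro j hj; rw [Finset.mem_range] at *; omega
      · intro j _ hj
        rw [Finset.mem_range, not_lt] at hj
        have : N.choose j = 0 := Nat.choose_eq_zero_of_lt (by omega)
        split <;> simp [this]
    have e2 : ∑ j ∈ range (a+1), (-1:ℂ)^j * (N.choose j) * ((M-j).choose (a-j))
        = ∑ j ∈ range (N+a+1),
          (if j ≤ a then (-1:ℂ)^j * (N.choose j) * ((M-j).choose (a-j)) else 0) := by
      have hsub : range (a+1) ⊆ range (N+a+1) := by
        intro j hj; rw [Finset.mem_range] at *; omega
      have hvan : ∀ j ∈ range (N+a+1), j ∉ range (a+1) →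
          (if j ≤ a then (-1:ℂ)^j * (N.choose j) * ((M-j).choose (a-j)) else 0) = 0 := by
        intro j _ hj
        rw [Finset.mem_range, not_lt] at hj
        exact if_neg (by omega)
      rw [← Finset.sum_subset hsub hvan]
      apply Finset.sum_congr rfl
      intro j hj
      rw [Finset.mem_range] at hj
      rw [if_pos (by omega)]
    rw [e1, e2]
  rw [step1, step2, key1 N M a hNM haM, hMN]

lemma prod_sgn {α : Type} [Fintype α] (x : α → Bool) :
    ∏ i, sgn (x i) = (-1:ℂ)^(wt x) := by
  unfold sgn wt
  rw [Finset.prod_ite (fun _ => (-1:ℂ)) (fun _ => (1:ℂ))]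
  simp

lemma traceB (n r : ℕ) (S : Finset (Fin n)) (M : Matrix (Fin n → Bool) (Fin n → Bool) ℂ)
    (f : ({ i // i ∈ S } → Bool) → ({ i // i ∈ S } → Bool) → ℂ)
    (hf : ∀ z z' : Fin n → Bool,
      M z z' = if ∀ i ∉ S, z i = z' i then f (fun i => z i.1) (fun i => z' i.1) else 0)
    (hsr : S.card ≤ r) (hrn : r ≤ n) :
    Matrix.trace (M * Bmat n r) = ∑ x : { i // i ∈ S } → Bool,
      f x x * ((-1:ℂ)^(wt x) * (((S.card - wt x).choose (r - wt x) : ℕ) : ℂ)) := by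
  rw [Bmat_diag, trace_mul_diag]
  have hzz : ∀ z : Fin n → Bool, M z z = f (fun i => z i.1) (fun i => z i.1) := by
    intro z; rw [hf]; simp
  simp_rw [hzz]
  rw [sum_split S]
  apply Finset.sum_congr rfl
  intro x _
  have hres : ∀ y : {i // ¬ i ∈ S} → Bool,
      (fun (i : {i // i ∈ S}) => ((eS S).symm (x, y)) i.1) = x :=
    fun y => funext fun i => eS_symm_in S x y i
  simp_rw [hres, hw_split, ← Finset.mul_sum]
  congr 1
  rw [sum_fun_bool_weight _ (fun j => bcoef n r (wt x + j)), card_subOut]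
  have hwx : wt x ≤ S.card := by
    unfold wt
    calc (Finset.univ.filter fun i => x i = true).card ≤ Finset.univ.card :=
          Finset.card_filter_le _ _
      _ = S.card := by rw [Finset.card_univ]; exact Fintype.card_coe S
  exact key2 n r S.card (wt x) hwx hsr hrn


lemma wt_le_card {n : ℕ} (S : Finset (Fin n)) (x : {i // i ∈ S} → Bool) : wt x ≤ S.card := by
  unfold wt
  calc (Finset.univ.filter fun i => x i = true).card
      ≤ (Finset.univ : Finset {i // i ∈ S}).card := Finset.card_filter_le _ _
    _ = S.card := by rw [Finset.card_univ]; exact Fintype.card_coe S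

lemma traceC (n k : ℕ) (S : Finset (Fin n)) (M : Matrix (Fin n → Bool) (Fin n → Bool) ℂ)
    (f : ({ i // i ∈ S } → Bool) → ({ i // i ∈ S } → Bool) → ℂ)
    (hf : ∀ z z' : Fin n → Bool,
      M z z' = if ∀ i ∉ S, z i = z' i then f (fun i => z i.1) (fun i => z' i.1) else 0)
    (hsk : S.card ≤ k) (hkn : k ≤ n) :
    Matrix.trace (M * Cmat n k) = if S.card = k then
      (2:ℂ)^(n-k) * ∑ x : { i // i ∈ S } → Bool, f x x * (-1:ℂ)^(wt x) else 0 := by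
  rw [show Cmat n k = Matrix.diagonal (fun z =>
      ∑ T ∈ Finset.powersetCard k (Finset.univ : Finset (Fin n)), ∏ i ∈ T, sgn (z i)) from rfl]
  rw [trace_mul_diag]
  have hzz : ∀ z : Fin n → Bool, M z z = f (fun i => z i.1) (fun i => z i.1) := by
    intro z; rw [hf]; simp
  simp_rw [hzz]
  rw [sum_split S]
  have hres : ∀ (x : {i // i ∈ S} → Bool) (y : {i // ¬ i ∈ S} → Bool),
      (fun (i : {i // i ∈ S}) => ((eS S).symm (x, y)) i.1) = x :=
    fun x y => funext fun i => eS_symm_in S x y i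
  simp_rw [hres, ← Finset.mul_sum]
  have inner : ∀ x : {i // i ∈ S} → Bool,
      (∑ y : {i // ¬ i ∈ S} → Bool, ∑ T ∈ Finset.powersetCard k (Finset.univ : Finset (Fin n)),
        ∏ i ∈ T, sgn (((eS S).symm (x, y)) i))
      = if S.card = k then (2:ℂ)^(n-k) * (-1:ℂ)^(wt x) else 0 := by
    intro x
    rw [Finset.sum_comm]
    have hT : ∀ T ∈ Finset.powersetCard k (Finset.univ : Finset (Fin n)),
        (∑ y : {i // ¬ i ∈ S} → Bool, ∏ i ∈ T, sgn (((eS S).symm (x, y)) i))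
        = if T = S then (2:ℂ)^(n-k) * (-1:ℂ)^(wt x) else 0 := by
      intro T hTmem
      rw [Finset.mem_powersetCard] at hTmem
      obtain ⟨-, hTcard⟩ := hTmem
      have expand : ∀ y : {i // ¬ i ∈ S} → Bool,
          (∏ i ∈ T, sgn (((eS S).symm (x, y)) i))
          = (∏ i : {i // i ∈ S}, if i.1 ∈ T then sgn (x i) else 1)
            * ∏ i : {i // ¬ i ∈ S}, (if i.1 ∈ T then sgn (y i) else 1) := by
        intro y
        rw [show (∏ i ∈ T, sgn (((eS S).symm (x, y)) i))
            = ∏ i ∈ (Finset.univ : Finset (Fin n)),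
                (if i ∈ T then sgn (((eS S).symm (x, y)) i) else 1) by
          rw [Finset.prod_ite_mem, Finset.univ_inter]]
        rw [← Fintype.prod_subtype_mul_prod_subtype (fun i => i ∈ S)
          (fun i => if i ∈ T then sgn (((eS S).symm (x, y)) i) else 1)]
        congr 1
        · exact Finset.prod_congr (by congr!) fun i _ => by rw [eS_symm_in]
        · exact Finset.prod_congr (by congr!) fun i _ => by rw [eS_symm_out]
      simp_rw [expand, ← Finset.mul_sum]
      rw [sum_fun_bool_prod {i // ¬ i ∈ S} (fun i b => if i.1 ∈ T then sgn b else 1)]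
      by_cases hTS : T ⊆ S
      · have hTeq : T = S := Finset.eq_of_subset_of_card_le hTS (by omega)
        subst hTeq
        rw [if_pos rfl]
        have h1 : (∏ i : {i // i ∈ T}, if i.1 ∈ T then sgn (x i) else 1)
            = (-1:ℂ)^(wt x) := by
          rw [← prod_sgn x]
          exact Finset.prod_congr rfl fun i _ => if_pos i.2
        have h2 : (∏ i : {i // ¬ i ∈ T},
              ((if i.1 ∈ T then sgn false else 1) + if i.1 ∈ T then sgn true else 1))
            = (2:ℂ)^(n-k) := by
          calc (∏ i : {i // ¬ i ∈ T},
                ((if i.1 ∈ T then sgn false else 1) + if i.1 ∈ T then sgn true else 1))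
              = ∏ _i : {i // ¬ i ∈ T}, (2:ℂ) :=
                Finset.prod_congr rfl fun i _ => by rw [if_neg i.2, if_neg i.2]; norm_num
            _ = (2:ℂ)^(n-k) := by
                rw [Finset.prod_const, Finset.card_univ, card_subOut, hTcard]
        rw [h1, h2]
        ring
      · rw [if_neg (show T ≠ S from fun h => hTS (by rw [h]))]
        obtain ⟨i0, hi0T, hi0S⟩ := Finset.not_subset.mp hTS
        have hz : (∏ i : {i // ¬ i ∈ S},
              ((if i.1 ∈ T then sgn false else 1) + if i.1 ∈ T then sgn true else 1))
            = 0 := by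
          apply Finset.prod_eq_zero (Finset.mem_univ (⟨i0, hi0S⟩ : {i // ¬ i ∈ S}))
          rw [if_pos hi0T, if_pos hi0T]
          simp [sgn]
        rw [hz, mul_zero]
    rw [Finset.sum_congr rfl hT, Finset.sum_ite_eq' (Finset.powersetCard k Finset.univ) S
      (fun _ => (2:ℂ)^(n-k) * (-1:ℂ)^(wt x))]
    simp only [Finset.mem_powersetCard_univ]
  simp_rw [inner]
  by_cases hSk : S.card = k
  · rw [if_pos hSk]
    simp_rw [if_pos hSk, Finset.mul_sum]
    apply Finset.sum_congr rfl
    intro x _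
    ring
  · rw [if_neg hSk]
    simp_rw [if_neg hSk]
    simp

/-- Lemma 1 of the paper: for a `k`-local `H`,
`2^n Tr(H B_k) = 2^k Tr(H C_k)` and `Tr(H B_r) = 0` for `k < r ≤ n`. -/
theorem stmt16 (n k : ℕ) (hn : 1 ≤ n) (hk : k ≤ n)
    (H : Matrix (Fin n → Bool) (Fin n → Bool) ℂ) (hH : KLocal k H) :
    (2^n : ℂ) * Matrix.trace (H * Bmat n k) = (2^k : ℂ) * Matrix.trace (H * Cmat n k) ∧
    ∀ r, k < r → r ≤ n → Matrix.trace (H * Bmat n r) = 0 := by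
  obtain ⟨p, g, S, hgs, rfl⟩ := hH
  have hB : ∀ r, Matrix.trace ((∑ i, g i) * Bmat n r) = ∑ i, Matrix.trace (g i * Bmat n r) := by
    intro r; rw [Finset.sum_mul, Matrix.trace_sum]
  constructor
  · rw [hB k, show Matrix.trace ((∑ i, g i) * Cmat n k)
        = ∑ i, Matrix.trace (g i * Cmat n k) from by rw [Finset.sum_mul, Matrix.trace_sum]]
    rw [Finset.mul_sum, Finset.mul_sum]
    apply Finset.sum_congr rfl
    intro i _
    obtain ⟨hsk, f, hf⟩ := hgs i
    rw [traceB n k (S i) (g i) f hf hsk hk, traceC n k (S i) (g i) f hf hsk hk]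
    by_cases hcase : (S i).card = k
    · rw [if_pos hcase, ← mul_assoc,
        show (2:ℂ)^k * (2:ℂ)^(n-k) = 2^n by rw [← pow_add]; congr 1; omega]
      congr 1
      apply Finset.sum_congr rfl
      intro x _
      rw [hcase, Nat.choose_self]
      simp
    · rw [if_neg hcase, mul_zero]
      have hz : ∀ x : {j // j ∈ S i} → Bool,
          ((S i).card - wt x).choose (k - wt x) = 0 := by
        intro x
        have hwx : wt x ≤ (S i).card := wt_le_card (S i) x
        exact Nat.choose_eq_zero_of_lt (by omega)
      simp [hz]
  · intro r hkr hrn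
    rw [hB r]
    apply Finset.sum_eq_zero
    intro i _
    obtain ⟨hsk, f, hf⟩ := hgs i
    rw [traceB n r (S i) (g i) f hf (le_trans hsk (le_of_lt hkr)) hrn]
    apply Finset.sum_eq_zero
    intro x _
    have hwx : wt x ≤ (S i).card := wt_le_card (S i) x
    have hz : ((S i).card - wt x).choose (r - wt x) = 0 :=
      Nat.choose_eq_zero_of_lt (by omega)
    simp [hz]
end
end
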